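/- arXiv:1402.6609 — 7 statements merged into one kernel-verified Lean document; each statement's English description precedes it below -/
import Mathlib

section
/- In the algebra with generators β13, β14, β23, β24, r⁻¹ satisfying β13r⁻¹ = q⁻¹r⁻¹β13, β14r⁻¹ = q⁻¹r⁻¹β14, β23r⁻¹ = q r⁻¹β23, β24r⁻¹ = q r⁻¹β24, the rescaled elements x23 := β23r⁻¹, x24 := β24r⁻¹, x23* := r⁻¹β23*, x24* := r⁻¹β24* pairwise commute. -/
/-- In the algebra generated by β13, β14, β23, β24, r⁻¹ with
βᵢⱼ r⁻¹ = q^{∓1} r⁻¹ βᵢⱼ, the rescaled elements x23 := β23r⁻¹, x24 := β24r⁻¹,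
x23* := r⁻¹β23*, x24* := r⁻¹β24* (with β23* = -q⁻¹β14, β24* = q⁻¹β13) pairwise commute. -/
theorem stmt3 (A : Type*) [Ring A] [Algebra ℝ A] (q : ℝ) (hq : q ≠ 0)
    (b13 b14 b23 b24 rinv : A)
    -- β-relations
    (r1 : b23 * b24 = b24 * b23)
    (r2 : b13 * b23 = (q ^ 2) • (b23 * b13))
    (r3 : b13 * b24 = (q ^ 2) • (b24 * b13))
    (r4 : b14 * b23 = (q ^ 2) • (b23 * b14))
    (r5 : b14 * b24 = (q ^ 2) • (b24 * b14))
    (r6 : b13 * b14 = b14 * b13)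
    -- commutation with r⁻¹
    (c13 : b13 * rinv = q⁻¹ • (rinv * b13))
    (c14 : b14 * rinv = q⁻¹ • (rinv * b14))
    (c23 : b23 * rinv = q • (rinv * b23))
    (c24 : b24 * rinv = q • (rinv * b24))
    -- the rescaled elements, with β24* = q⁻¹β13 and β23* = -q⁻¹β14
    (x23 x24 x23s x24s : A)
    (hx23 : x23 = b23 * rinv) (hx24 : x24 = b24 * rinv)
    (hx23s : x23s = rinv * (-(q⁻¹ • b14))) (hx24s : x24s = rinv * (q⁻¹ • b13)) :
    x23 * x24 = x24 * x23 ∧ x23 * x23s = x23s * x23 ∧ x23 * x24s = x24s * x23 ∧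
    x24 * x23s = x23s * x24 ∧ x24 * x24s = x24s * x24 ∧ x23s * x24s = x24s * x23s := by
  subst hx23 hx24 hx23s hx24s
  have hq2 : (q ^ 2 : ℝ) ≠ 0 := pow_ne_zero _ hq
  have e13 : rinv * b13 = q • (b13 * rinv) := by
    rw [c13, smul_smul, mul_inv_cancel₀ hq, one_smul]
  have e14 : rinv * b14 = q • (b14 * rinv) := by
    rw [c14, smul_smul, mul_inv_cancel₀ hq, one_smul]
  have e23 : rinv * b23 = q⁻¹ • (b23 * rinv) := by
    rw [c23, smul_smul, inv_mul_cancel₀ hq, one_smul]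
  have e24 : rinv * b24 = q⁻¹ • (b24 * rinv) := by
    rw [c24, smul_smul, inv_mul_cancel₀ hq, one_smul]
  have o1 : b24 * b23 = b23 * b24 := r1.symm
  have o6 : b14 * b13 = b13 * b14 := r6.symm
  have E13 : ∀ x : A, rinv * (b13 * x) = q • (b13 * (rinv * x)) := fun x => by
    rw [← mul_assoc, e13, smul_mul_assoc, mul_assoc]
  have E14 : ∀ x : A, rinv * (b14 * x) = q • (b14 * (rinv * x)) := fun x => by
    rw [← mul_assoc, e14, smul_mul_assoc, mul_assoc]
  have E23 : ∀ x : A, rinv * (b23 * x) = q⁻¹ • (b23 * (rinv * x)) := fun x => by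
    rw [← mul_assoc, e23, smul_mul_assoc, mul_assoc]
  have E24 : ∀ x : A, rinv * (b24 * x) = q⁻¹ • (b24 * (rinv * x)) := fun x => by
    rw [← mul_assoc, e24, smul_mul_assoc, mul_assoc]
  have O1 : ∀ x : A, b24 * (b23 * x) = b23 * (b24 * x) := fun x => by
    rw [← mul_assoc, o1, mul_assoc]
  have O6 : ∀ x : A, b14 * (b13 * x) = b13 * (b14 * x) := fun x => by
    rw [← mul_assoc, o6, mul_assoc]
  have R2 : ∀ x : A, b13 * (b23 * x) = (q ^ 2) • (b23 * (b13 * x)) := fun x => by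
    rw [← mul_assoc, r2, smul_mul_assoc, mul_assoc]
  have R3 : ∀ x : A, b13 * (b24 * x) = (q ^ 2) • (b24 * (b13 * x)) := fun x => by
    rw [← mul_assoc, r3, smul_mul_assoc, mul_assoc]
  have R4 : ∀ x : A, b14 * (b23 * x) = (q ^ 2) • (b23 * (b14 * x)) := fun x => by
    rw [← mul_assoc, r4, smul_mul_assoc, mul_assoc]
  have R5 : ∀ x : A, b14 * (b24 * x) = (q ^ 2) • (b24 * (b14 * x)) := fun x => by
    rw [← mul_assoc, r5, smul_mul_assoc, mul_assoc]
  refine ⟨?_, ?_, ?_, ?_, ?_, ?_⟩ <;>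
    simp only [mul_assoc, mul_neg, neg_mul, smul_mul_assoc, mul_smul_comm, smul_smul,
      smul_neg, neg_neg, e13, e14, e23, e24, o1, o6, r2, r3, r4, r5,
      E13, E14, E23, E24, O1, O6, R2, R3, R4, R5] <;>
    match_scalars <;> field_simp <;> ring
end

section
/- Under the hypotheses of the previous setting, if additionally r⁻²(β13β24 - β14β23) = q, then the commuting elements x23 = β23r⁻¹, x24 = β24r⁻¹ satisfy the three-sphere relation x23*x23 + x24*x24 = 1, where x23* = r⁻¹β23* and x24* = r⁻¹β24*. -/
/-- Under the same hypotheses, if additionally r⁻²(β13β24 - β14β23) = q, then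
x23 = β23r⁻¹, x24 = β24r⁻¹ satisfy the three-sphere relation x23*x23 + x24*x24 = 1,
where x23* = r⁻¹β23* = r⁻¹(-q⁻¹β14) and x24* = r⁻¹β24* = r⁻¹(q⁻¹β13). -/
theorem stmt4 (A : Type*) [Ring A] [Algebra ℝ A] (q : ℝ) (hq : q ≠ 0)
    (b13 b14 b23 b24 rinv : A)
    (r1 : b23 * b24 = b24 * b23)
    (r2 : b13 * b23 = (q ^ 2) • (b23 * b13))
    (r3 : b13 * b24 = (q ^ 2) • (b24 * b13))
    (r4 : b14 * b23 = (q ^ 2) • (b23 * b14))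
    (r5 : b14 * b24 = (q ^ 2) • (b24 * b14))
    (r6 : b13 * b14 = b14 * b13)
    (c13 : b13 * rinv = q⁻¹ • (rinv * b13))
    (c14 : b14 * rinv = q⁻¹ • (rinv * b14))
    (c23 : b23 * rinv = q • (rinv * b23))
    (c24 : b24 * rinv = q • (rinv * b24))
    -- the sphere relation r⁻²(β13β24 - β14β23) = q = (β13β24 - β14β23)r⁻²
    (hr1 : rinv * rinv * (b13 * b24 - b14 * b23) = q • (1 : A))
    (hr2 : (b13 * b24 - b14 * b23) * (rinv * rinv) = q • (1 : A))
    (x23 x24 x23s x24s : A)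
    (hx23 : x23 = b23 * rinv) (hx24 : x24 = b24 * rinv)
    (hx23s : x23s = rinv * (-(q⁻¹ • b14))) (hx24s : x24s = rinv * (q⁻¹ • b13)) :
    x23s * x23 + x24s * x24 = 1 := by
  have h1 : b13 * b24 * rinv = rinv * (b13 * b24) := by
    rw [mul_assoc, c24, mul_smul_comm, ← mul_assoc, c13, smul_mul_assoc, smul_smul,
      mul_inv_cancel₀ hq, one_smul, mul_assoc]
  have h2 : b14 * b23 * rinv = rinv * (b14 * b23) := by
    rw [mul_assoc, c23, mul_smul_comm, ← mul_assoc, c14, smul_mul_assoc, smul_smul,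
      mul_inv_cancel₀ hq, one_smul, mul_assoc]
  subst hx23 hx24 hx23s hx24s
  have e1 : rinv * -(q⁻¹ • b14) * (b23 * rinv) = -(q⁻¹ • (rinv * (rinv * (b14 * b23)))) := by
    rw [← h2]
    rw [mul_neg, neg_mul, mul_smul_comm, smul_mul_assoc]
    ring_nf
    rw [mul_assoc, mul_assoc]
  have e2 : rinv * (q⁻¹ • b13) * (b24 * rinv) = q⁻¹ • (rinv * (rinv * (b13 * b24))) := by
    rw [← h1, mul_smul_comm, smul_mul_assoc]
    ring_nf
    rw [mul_assoc, mul_assoc]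
  rw [e1, e2, add_comm, ← sub_eq_add_neg, ← smul_sub, ← mul_sub, ← mul_sub, ← mul_assoc,
    hr1, smul_smul, inv_mul_cancel₀ hq, one_smul]
end

section
/- The element r² := q⁻¹(β13β24 - β14β23) equals β24*β24 + β23*β23 and is a two-sided inverse of r⁻² in the algebra: r²·r⁻² = r⁻²·r² = 1. -/
/-- The element r² := q⁻¹(β13β24 - β14β23) equals β24*β24 + β23*β23
(with β24* = q⁻¹β13, β23* = -q⁻¹β14) and is a two-sided inverse of r⁻². -/
theorem stmt5 (A : Type*) [Ring A] [Algebra ℝ A] (q : ℝ) (hq : q ≠ 0)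
    (b13 b14 b23 b24 rinv : A)
    (hr1 : rinv * rinv * (b13 * b24 - b14 * b23) = q • (1 : A))
    (hr2 : (b13 * b24 - b14 * b23) * (rinv * rinv) = q • (1 : A))
    (b23s b24s : A) (hb23s : b23s = -(q⁻¹ • b14)) (hb24s : b24s = q⁻¹ • b13)
    (r2 : A) (hr2def : r2 = q⁻¹ • (b13 * b24 - b14 * b23)) :
    r2 = b24s * b24 + b23s * b23 ∧
    r2 * (rinv * rinv) = 1 ∧ (rinv * rinv) * r2 = 1 := by
  subst hb23s hb24s hr2def
  refine ⟨by simp [smul_sub, smul_mul_assoc, sub_eq_add_neg], ?_, ?_⟩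
  · rw [smul_mul_assoc, hr2, smul_smul, inv_mul_cancel₀ hq, one_smul]
  · rw [mul_smul_comm, hr1, smul_smul, inv_mul_cancel₀ hq, one_smul]
end

section
/- Let A and B be associative unital algebras and Ψ: B⊗A → A⊗B a normal linear twist map (i.e., Ψ(b⊗1) = 1⊗b and Ψ(1⊗a) = a⊗1) satisfying the two hexagon conditions (id_A⊗m_B)(Ψ⊗id_B)(id_B⊗Ψ) = Ψ(m_B⊗id_A) and (m_A⊗id_B)(id_A⊗Ψ)(Ψ⊗id_A) = Ψ(id_B⊗m_A). Then the multiplication m_Ψ := (m_A⊗m_B)(id_A⊗Ψ⊗id_B) on A⊗B is associative with unit 1⊗1. -/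
open TensorProduct

set_option synthInstance.maxHeartbeats 1000000
set_option maxHeartbeats 1000000

/-- The twisted multiplication m_Ψ := (m_A ⊗ m_B)(id_A ⊗ Ψ ⊗ id_B) on A ⊗ B. -/
noncomputable def twistedMul (k A B : Type*) [CommRing k] [Ring A] [Ring B]
    [Algebra k A] [Algebra k B] (Ψ : B ⊗[k] A →ₗ[k] A ⊗[k] B) :
    (A ⊗[k] B) ⊗[k] (A ⊗[k] B) →ₗ[k] A ⊗[k] B :=
  TensorProduct.map (LinearMap.mul' k A) (LinearMap.mul' k B)
    ∘ₗ (TensorProduct.assoc k A A (B ⊗[k] B)).symm.toLinearMap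
    ∘ₗ TensorProduct.map LinearMap.id (TensorProduct.assoc k A B B).toLinearMap
    ∘ₗ TensorProduct.map LinearMap.id (TensorProduct.map Ψ LinearMap.id)
    ∘ₗ TensorProduct.map LinearMap.id (TensorProduct.assoc k B A B).symm.toLinearMap
    ∘ₗ (TensorProduct.assoc k A B (A ⊗[k] B)).toLinearMap

section Aux

variable {k A B : Type*} [CommRing k] [Ring A] [Ring B]
  [Algebra k A] [Algebra k B] (Ψ : B ⊗[k] A →ₗ[k] A ⊗[k] B)

/-- auxiliary map encoding the left hexagon composite. -/
noncomputable def Gmap : B ⊗[k] (A ⊗[k] B) →ₗ[k] A ⊗[k] B :=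
  (TensorProduct.map (LinearMap.id : A →ₗ[k] A) (LinearMap.mul' k B))
    ∘ₗ (TensorProduct.assoc k A B B).toLinearMap
    ∘ₗ TensorProduct.map Ψ LinearMap.id
    ∘ₗ (TensorProduct.assoc k B A B).symm.toLinearMap

/-- auxiliary map encoding the right hexagon composite. -/
noncomputable def Hmap : (A ⊗[k] B) ⊗[k] A →ₗ[k] A ⊗[k] B :=
  (TensorProduct.map (LinearMap.mul' k A) (LinearMap.id : B →ₗ[k] B))
    ∘ₗ (TensorProduct.assoc k A A B).symm.toLinearMap
    ∘ₗ TensorProduct.map LinearMap.id Ψ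
    ∘ₗ (TensorProduct.assoc k A B A).toLinearMap

lemma Gmap_tmul_tmul (q : B) (r : A) (s : B) :
    Gmap Ψ (q ⊗ₜ (r ⊗ₜ s)) =
      TensorProduct.map (LinearMap.id : A →ₗ[k] A) (LinearMap.mulRight k s) (Ψ (q ⊗ₜ r)) := by
  simp only [Gmap, LinearMap.comp_apply, LinearEquiv.coe_coe, assoc_symm_tmul, map_tmul,
    LinearMap.id_apply]
  generalize Ψ (q ⊗ₜ r) = w
  induction w using TensorProduct.induction_on with
  | zero => simp
  | tmul x y => simp [LinearMap.mul'_apply]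
  | add u v hu hv => simp only [add_tmul, tmul_add, map_add, hu, hv]

lemma Hmap_tmul_tmul (p : A) (q : B) (r : A) :
    Hmap Ψ ((p ⊗ₜ q) ⊗ₜ r) =
      TensorProduct.map (LinearMap.mulLeft k p) (LinearMap.id : B →ₗ[k] B) (Ψ (q ⊗ₜ r)) := by
  simp only [Hmap, LinearMap.comp_apply, LinearEquiv.coe_coe, assoc_tmul, map_tmul,
    LinearMap.id_apply]
  generalize Ψ (q ⊗ₜ r) = w
  induction w using TensorProduct.induction_on with
  | zero => simp
  | tmul x y => simp [LinearMap.mul'_apply]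
  | add u v hu hv => simp only [add_tmul, tmul_add, map_add, hu, hv]

/-- computation of the twisted multiplication on pure tensors. -/
lemma twistedMul_tmul (a : A) (b : B) (c : A) (d : B) :
    twistedMul k A B Ψ ((a ⊗ₜ b) ⊗ₜ (c ⊗ₜ d)) =
      TensorProduct.map (LinearMap.mulLeft k a) (LinearMap.mulRight k d) (Ψ (b ⊗ₜ c)) := by
  simp only [twistedMul, LinearMap.comp_apply, LinearEquiv.coe_coe, assoc_tmul, map_tmul,
    LinearMap.id_apply, assoc_symm_tmul]
  generalize Ψ (b ⊗ₜ c) = w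
  induction w using TensorProduct.induction_on with
  | zero => simp
  | tmul x y => simp [LinearMap.mul'_apply]
  | add u v hu hv => simp only [add_tmul, tmul_add, map_add, hu, hv]

/-- Θ map: pure formula Θ ((p⊗q)⊗v) = map (mulLeft (a*p)) (mulRight f) (Gmap (q ⊗ v)). -/
noncomputable def Theta (a : A) (f : B) : (A ⊗[k] B) ⊗[k] (A ⊗[k] B) →ₗ[k] A ⊗[k] B :=
  (TensorProduct.map ((LinearMap.mul' k A) ∘ₗ TensorProduct.map (LinearMap.mulLeft k a) LinearMap.id)
      (LinearMap.mulRight k f)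
    ∘ₗ (TensorProduct.assoc k A A B).symm.toLinearMap)
    ∘ₗ TensorProduct.map LinearMap.id (Gmap Ψ)
    ∘ₗ (TensorProduct.assoc k A B (A ⊗[k] B)).toLinearMap

lemma Theta_tmul (a : A) (f : B) (p : A) (q : B) (v : A ⊗[k] B) :
    Theta Ψ a f ((p ⊗ₜ q) ⊗ₜ v) =
      TensorProduct.map (LinearMap.mulLeft k (a * p)) (LinearMap.mulRight k f)
        (Gmap Ψ (q ⊗ₜ v)) := by
  simp only [Theta, LinearMap.comp_apply, LinearEquiv.coe_coe, assoc_tmul, map_tmul,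
    LinearMap.id_apply]
  generalize Gmap Ψ (q ⊗ₜ v) = w
  induction w using TensorProduct.induction_on with
  | zero => simp
  | tmul x y => simp [LinearMap.mul'_apply, mul_assoc]
  | add u v hu hv => simp only [add_tmul, tmul_add, map_add, hu, hv]

/-- Θ' map: pure formula Θ' (u⊗(r⊗s)) = map (mulLeft a) (mulRight f ∘ mulRight s) (Hmap (u ⊗ r)). -/
noncomputable def Theta' (a : A) (f : B) : (A ⊗[k] B) ⊗[k] (A ⊗[k] B) →ₗ[k] A ⊗[k] B :=
  (TensorProduct.map (LinearMap.mulLeft k a)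
      ((LinearMap.mulRight k f) ∘ₗ (LinearMap.mul' k B))
    ∘ₗ (TensorProduct.assoc k A B B).toLinearMap)
    ∘ₗ TensorProduct.map (Hmap Ψ) LinearMap.id
    ∘ₗ (TensorProduct.assoc k (A ⊗[k] B) A B).symm.toLinearMap

lemma Theta'_tmul (a : A) (f : B) (u : A ⊗[k] B) (r : A) (s : B) :
    Theta' Ψ a f (u ⊗ₜ (r ⊗ₜ s)) =
      TensorProduct.map (LinearMap.mulLeft k a)
        ((LinearMap.mulRight k f) ∘ₗ (LinearMap.mulRight k s)) (Hmap Ψ (u ⊗ₜ r)) := by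
  simp only [Theta', LinearMap.comp_apply, LinearEquiv.coe_coe, assoc_symm_tmul, map_tmul,
    LinearMap.id_apply]
  generalize Hmap Ψ (u ⊗ₜ r) = w
  induction w using TensorProduct.induction_on with
  | zero => simp
  | tmul x y => simp [LinearMap.mul'_apply, mul_assoc]
  | add u v hu hv => simp only [add_tmul, tmul_add, map_add, hu, hv]

lemma Theta_eq_Theta' (a : A) (f : B) (u v : A ⊗[k] B) :
    Theta Ψ a f (u ⊗ₜ v) = Theta' Ψ a f (u ⊗ₜ v) := by
  induction u using TensorProduct.induction_on with
  | zero => simp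
  | add u1 u2 h1 h2 => simp only [add_tmul, map_add, h1, h2]
  | tmul p q =>
    induction v using TensorProduct.induction_on with
    | zero => simp
    | add v1 v2 h1 h2 => simp only [tmul_add, map_add, h1, h2]
    | tmul r s =>
      rw [Theta_tmul, Theta'_tmul, Gmap_tmul_tmul, Hmap_tmul_tmul]
      generalize Ψ (q ⊗ₜ r) = w
      induction w using TensorProduct.induction_on with
      | zero => simp
      | tmul x y => simp [LinearMap.mul'_apply, mul_assoc]
      | add u v hu hv => simp only [map_add, hu, hv]

/-- pointwise form of hexagon 1. -/
lemma hex1'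
    (hHex1 :
      (TensorProduct.map (LinearMap.id : A →ₗ[k] A) (LinearMap.mul' k B))
        ∘ₗ (TensorProduct.assoc k A B B).toLinearMap
        ∘ₗ TensorProduct.map Ψ LinearMap.id
        ∘ₗ (TensorProduct.assoc k B A B).symm.toLinearMap
        ∘ₗ TensorProduct.map LinearMap.id Ψ
      = Ψ ∘ₗ TensorProduct.map (LinearMap.mul' k B) LinearMap.id
          ∘ₗ (TensorProduct.assoc k B B A).symm.toLinearMap)
    (b b' : B) (a : A) :
    Gmap Ψ (b ⊗ₜ Ψ (b' ⊗ₜ a)) = Ψ ((b * b') ⊗ₜ a) := by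
  have h := DFunLike.congr_fun hHex1 (b ⊗ₜ[k] (b' ⊗ₜ[k] a))
  simpa [Gmap, LinearMap.mul'_apply] using h

/-- pointwise form of hexagon 2. -/
lemma hex2'
    (hHex2 :
      (TensorProduct.map (LinearMap.mul' k A) (LinearMap.id : B →ₗ[k] B))
        ∘ₗ (TensorProduct.assoc k A A B).symm.toLinearMap
        ∘ₗ TensorProduct.map LinearMap.id Ψ
        ∘ₗ (TensorProduct.assoc k A B A).toLinearMap
        ∘ₗ TensorProduct.map Ψ LinearMap.id
      = Ψ ∘ₗ TensorProduct.map LinearMap.id (LinearMap.mul' k A)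
          ∘ₗ (TensorProduct.assoc k B A A).toLinearMap)
    (b : B) (a a' : A) :
    Hmap Ψ (Ψ (b ⊗ₜ a) ⊗ₜ a') = Ψ (b ⊗ₜ (a * a')) := by
  have h := DFunLike.congr_fun hHex2 ((b ⊗ₜ[k] a) ⊗ₜ[k] a')
  simpa [Hmap, LinearMap.mul'_apply] using h

end Aux

/-- if the normal twist Ψ satisfies the two hexagon conditions, then the
twisted multiplication m_Ψ on A ⊗ B is associative with unit 1 ⊗ 1. -/
theorem stmt7 (k A B : Type*) [CommRing k] [Ring A] [Ring B]
    [Algebra k A] [Algebra k B] (Ψ : B ⊗[k] A →ₗ[k] A ⊗[k] B)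
    -- normality
    (hN1 : ∀ b : B, Ψ (b ⊗ₜ[k] (1 : A)) = (1 : A) ⊗ₜ[k] b)
    (hN2 : ∀ a : A, Ψ ((1 : B) ⊗ₜ[k] a) = a ⊗ₜ[k] (1 : B))
    -- hexagon (id_A ⊗ m_B)(Ψ ⊗ id_B)(id_B ⊗ Ψ) = Ψ(m_B ⊗ id_A)
    (hHex1 :
      (TensorProduct.map (LinearMap.id : A →ₗ[k] A) (LinearMap.mul' k B))
        ∘ₗ (TensorProduct.assoc k A B B).toLinearMap
        ∘ₗ TensorProduct.map Ψ LinearMap.id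
        ∘ₗ (TensorProduct.assoc k B A B).symm.toLinearMap
        ∘ₗ TensorProduct.map LinearMap.id Ψ
      = Ψ ∘ₗ TensorProduct.map (LinearMap.mul' k B) LinearMap.id
          ∘ₗ (TensorProduct.assoc k B B A).symm.toLinearMap)
    -- hexagon (m_A ⊗ id_B)(id_A ⊗ Ψ)(Ψ ⊗ id_A) = Ψ(id_B ⊗ m_A)
    (hHex2 :
      (TensorProduct.map (LinearMap.mul' k A) (LinearMap.id : B →ₗ[k] B))
        ∘ₗ (TensorProduct.assoc k A A B).symm.toLinearMap
        ∘ₗ TensorProduct.map LinearMap.id Ψ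
        ∘ₗ (TensorProduct.assoc k A B A).toLinearMap
        ∘ₗ TensorProduct.map Ψ LinearMap.id
      = Ψ ∘ₗ TensorProduct.map LinearMap.id (LinearMap.mul' k A)
          ∘ₗ (TensorProduct.assoc k B A A).toLinearMap) :
    (∀ x y z : A ⊗[k] B,
      twistedMul k A B Ψ ((twistedMul k A B Ψ (x ⊗ₜ[k] y)) ⊗ₜ[k] z) =
        twistedMul k A B Ψ (x ⊗ₜ[k] (twistedMul k A B Ψ (y ⊗ₜ[k] z)))) ∧
    (∀ x : A ⊗[k] B,
      twistedMul k A B Ψ ((((1 : A) ⊗ₜ[k] (1 : B))) ⊗ₜ[k] x) = x ∧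
      twistedMul k A B Ψ (x ⊗ₜ[k] ((1 : A) ⊗ₜ[k] (1 : B))) = x) := by
  constructor
  · -- associativity
    -- first the pure-tensor case
    have pure : ∀ (a : A) (b : B) (c : A) (d : B) (e : A) (f : B),
        twistedMul k A B Ψ ((twistedMul k A B Ψ ((a ⊗ₜ[k] b) ⊗ₜ (c ⊗ₜ[k] d))) ⊗ₜ[k] (e ⊗ₜ[k] f)) =
        twistedMul k A B Ψ ((a ⊗ₜ[k] b) ⊗ₜ[k] (twistedMul k A B Ψ ((c ⊗ₜ[k] d) ⊗ₜ (e ⊗ₜ[k] f)))) := by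
      intro a b c d e f
      rw [twistedMul_tmul Ψ a b c d, twistedMul_tmul Ψ c d e f]
      have stepL : ∀ u : A ⊗[k] B,
          twistedMul k A B Ψ
            ((TensorProduct.map (LinearMap.mulLeft k a) (LinearMap.mulRight k d) u) ⊗ₜ[k] (e ⊗ₜ[k] f))
            = Theta Ψ a f (u ⊗ₜ Ψ (d ⊗ₜ e)) := by
        intro u
        induction u using TensorProduct.induction_on with
        | zero => simp
        | tmul p q =>
          rw [TensorProduct.map_tmul]
          simp only [LinearMap.mulLeft_apply, LinearMap.mulRight_apply]
          rw [twistedMul_tmul Ψ (a * p) (q * d) e f, Theta_tmul,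
            ← hex1' Ψ hHex1 q d e]
        | add u1 u2 h1 h2 => simp only [map_add, add_tmul, tmul_add, h1, h2]
      have stepR : ∀ v : A ⊗[k] B,
          twistedMul k A B Ψ
            ((a ⊗ₜ[k] b) ⊗ₜ[k] (TensorProduct.map (LinearMap.mulLeft k c) (LinearMap.mulRight k f) v))
            = Theta' Ψ a f (Ψ (b ⊗ₜ c) ⊗ₜ v) := by
        intro v
        induction v using TensorProduct.induction_on with
        | zero => simp
        | tmul r s =>
          rw [TensorProduct.map_tmul]
          simp only [LinearMap.mulLeft_apply, LinearMap.mulRight_apply]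
          rw [twistedMul_tmul Ψ a b (c * r) (s * f), Theta'_tmul,
            ← hex2' Ψ hHex2 b c r]
          congr 1
          ext x y
          simp [LinearMap.mul'_apply, mul_assoc]
        | add v1 v2 h1 h2 => simp only [map_add, add_tmul, tmul_add, h1, h2]
      rw [stepL, stepR, Theta_eq_Theta']
    intro x y z
    induction x using TensorProduct.induction_on with
    | zero => simp
    | add x1 x2 h1 h2 => simp only [add_tmul, tmul_add, map_add, h1, h2]
    | tmul a b =>
      induction y using TensorProduct.induction_on with
      | zero => simp
      | add y1 y2 h1 h2 => simp only [add_tmul, tmul_add, map_add, h1, h2]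
      | tmul c d =>
        induction z using TensorProduct.induction_on with
        | zero => simp
        | add z1 z2 h1 h2 => simp only [add_tmul, tmul_add, map_add, h1, h2]
        | tmul e f => exact pure a b c d e f
  · -- unitality
    intro x
    constructor
    · induction x using TensorProduct.induction_on with
      | zero => simp
      | tmul a b =>
        rw [twistedMul_tmul, hN2 a, TensorProduct.map_tmul]
        simp
      | add u v hu hv => simp only [tmul_add, map_add, hu, hv]
    · induction x using TensorProduct.induction_on with
      | zero => simp
      | tmul a b =>
        rw [twistedMul_tmul, hN1 b, TensorProduct.map_tmul]
        simp
      | add u v hu hv => simp only [add_tmul, map_add, hu, hv]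
end

section
/- In the graded differential algebra over the North chart with relations β23dβ23 = dβ23·β23, β23dβ24 = dβ24·β23, β24dβ23 = dβ23·β24, β24dβ24 = dβ24·β24, β23dβ23* = q⁻²dβ23*·β23, β23dβ24* = q⁻²dβ24*·β23, β24dβ23* = q⁻²dβ23*·β24, β24dβ24* = q⁻²dβ24*·β24 (and those obtained by applying * and d), the one-form η₁ := β23*dβ23 + q²β24dβ24* - dβ23*·β23 - q²dβ24·β24* satisfies η₁∧η₁ = 0. -/
/- STATEMENT 16: computations in the noncommutative differential calculus {}_NΩ•_q of the
North chart of the quantum 4-sphere. Ω is the graded differential algebra, with degree-0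
generators β23, β24, β23*, β24*, degree-1 generators dβ23, dβ24, dβ23*, dβ24*, and the
commutation relations of the chart (including those obtained by applying * and d). -/

section Aux
variable {Ω : Type*} [Ring Ω] [Module ℝ Ω] [SMulCommClass ℝ Ω Ω] [IsScalarTower ℝ Ω Ω]

lemma auxS {a b c d : Ω} {s : ℝ} (h : a * b = s • (c * d)) (x : Ω) :
    a * (b * x) = s • (c * (d * x)) := by
  rw [← mul_assoc, h, smul_mul_assoc, mul_assoc]

lemma auxE {a b c d : Ω} (h : a * b = c * d) (x : Ω) :
    a * (b * x) = c * (d * x) := by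
  rw [← mul_assoc, h, mul_assoc]

lemma auxNS {a b c d : Ω} {s : ℝ} (h : a * b = -(s • (c * d))) (x : Ω) :
    a * (b * x) = -(s • (c * (d * x))) := by
  rw [← mul_assoc, h, neg_mul, smul_mul_assoc, mul_assoc]

lemma auxN {a b c d : Ω} (h : a * b = -(c * d)) (x : Ω) :
    a * (b * x) = -(c * (d * x)) := by
  rw [← mul_assoc, h, neg_mul, mul_assoc]

lemma auxZ {a b : Ω} (h : a * b = 0) (x : Ω) : a * (b * x) = 0 := by
  rw [← mul_assoc, h, zero_mul]

end Aux

theorem stmt16 (Ω : Type*) [Ring Ω] [Algebra ℝ Ω] (q : ℝ) (hq : q ≠ 0)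
    (b23 b24 b23s b24s db23 db24 db23s db24s : Ω)
    -- degree 0 relations
    (h01 : b23 * b24 = b24 * b23)
    (h02 : b23s * b24s = b24s * b23s)
    (h03 : b23 * b23s = ((q : ℝ) ^ 2)⁻¹ • (b23s * b23))
    (h04 : b23 * b24s = ((q : ℝ) ^ 2)⁻¹ • (b24s * b23))
    (h05 : b24 * b23s = ((q : ℝ) ^ 2)⁻¹ • (b23s * b24))
    (h06 : b24 * b24s = ((q : ℝ) ^ 2)⁻¹ • (b24s * b24))
    -- degree 0 / degree 1 relations
    (h11 : b23 * db23 = db23 * b23)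
    (h12 : b23 * db23s = ((q : ℝ) ^ 2)⁻¹ • (db23s * b23))
    (h13 : b23 * db24 = db24 * b23)
    (h14 : b23 * db24s = ((q : ℝ) ^ 2)⁻¹ • (db24s * b23))
    (h15 : b24 * db24 = db24 * b24)
    (h16 : b24 * db24s = ((q : ℝ) ^ 2)⁻¹ • (db24s * b24))
    (h17 : b24 * db23 = db23 * b24)
    (h18 : b24 * db23s = ((q : ℝ) ^ 2)⁻¹ • (db23s * b24))
    (h19 : b23s * db23 = ((q : ℝ) ^ 2) • (db23 * b23s))
    (h20 : b23s * db24 = ((q : ℝ) ^ 2) • (db24 * b23s))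
    (h21 : b23s * db23s = db23s * b23s)
    (h22 : b23s * db24s = db24s * b23s)
    (h23 : b24s * db23 = ((q : ℝ) ^ 2) • (db23 * b24s))
    (h24 : b24s * db24 = ((q : ℝ) ^ 2) • (db24 * b24s))
    (h25 : b24s * db23s = db23s * b24s)
    (h26 : b24s * db24s = db24s * b24s)
    -- degree 1 relations
    (h31 : db23 * db23 = 0) (h32 : db24 * db24 = 0)
    (h33 : db23s * db23s = 0) (h34 : db24s * db24s = 0)
    (h35 : db23 * db24 = -(db24 * db23))
    (h36 : db23s * db24s = -(db24s * db23s))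
    (h37 : db23 * db23s = -(((q : ℝ) ^ 2)⁻¹ • (db23s * db23)))
    (h38 : db23 * db24s = -(((q : ℝ) ^ 2)⁻¹ • (db24s * db23)))
    (h39 : db24 * db23s = -(((q : ℝ) ^ 2)⁻¹ • (db23s * db24)))
    (h40 : db24 * db24s = -(((q : ℝ) ^ 2)⁻¹ • (db24s * db24)))
    -- the one-form η₁ := β23*dβ23 + q²β24dβ24* - dβ23*·β23 - q²dβ24·β24*
    (η₁ : Ω)
    (hη₁ : η₁ = b23s * db23 + (q ^ 2) • (b24 * db24s)
      - db23s * b23 - (q ^ 2) • (db24 * b24s)) :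
    η₁ * η₁ = 0 := by
  have hq2 : (q : ℝ) ^ 2 ≠ 0 := pow_ne_zero 2 hq
  subst hη₁
  simp only [mul_add, add_mul, mul_sub, sub_mul, smul_mul_assoc, mul_smul_comm,
    mul_assoc, smul_smul,
    h01, h02, h03, h04, h05, h06, h11, h12, h13, h14, h15, h16, h17, h18, h19, h20,
    h21, h22, h23, h24, h25, h26, h31, h32, h33, h34, h35, h36, h37, h38, h39, h40,
    auxE h01, auxE h02, auxS h03, auxS h04, auxS h05, auxS h06,
    auxE h11, auxS h12, auxE h13, auxS h14, auxE h15, auxS h16, auxE h17, auxS h18,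
    auxS h19, auxS h20, auxE h21, auxE h22, auxS h23, auxS h24, auxE h25, auxE h26,
    auxZ h31, auxZ h32, auxZ h33, auxZ h34,
    auxN h35, auxN h36, auxNS h37, auxNS h38, auxNS h39, auxNS h40,
    mul_zero, zero_mul, smul_zero, neg_neg, mul_neg, neg_mul, smul_neg,
    inv_mul_cancel₀ hq2, mul_inv_cancel₀ hq2, one_smul, mul_one, one_mul]
  simp only [smul_add, smul_sub, smul_neg, smul_smul, smul_zero, add_zero, zero_add,
    sub_zero, zero_sub, neg_neg, mul_inv_cancel₀ hq2, inv_mul_cancel₀ hq2, one_smul]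
  abel
end

section
/- In the same differential calculus, with η₂ := 2(β23*dβ24 - q²β24dβ23*), one has the anticommutation η₁∧η₂ = -η₂∧η₁. -/
set_option linter.unusedSectionVars false
section helpers
variable {Ω : Type*} [Ring Ω] [Module ℝ Ω] [SMulCommClass ℝ Ω Ω] [IsScalarTower ℝ Ω Ω]

theorem e0' {a b c d : Ω} (h : a*b = c*d) (z : Ω) : a*(b*z) = c*(d*z) := by
  rw [← mul_assoc, h, mul_assoc]
theorem e1' {a b c d : Ω} {s : ℝ} (h : a*b = s•(c*d)) (z : Ω) : a*(b*z) = s•(c*(d*z)) := by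
  rw [← mul_assoc, h, smul_mul_assoc, mul_assoc]
theorem e3' {a b c d : Ω} (h : a*b = -(c*d)) (z : Ω) : a*(b*z) = -(c*(d*z)) := by
  rw [← mul_assoc, h, neg_mul, mul_assoc]
theorem e2' {a b c d : Ω} {s : ℝ} (h : a*b = -(s•(c*d))) (z : Ω) : a*(b*z) = -(s•(c*(d*z))) := by
  rw [← mul_assoc, h, neg_mul, smul_mul_assoc, mul_assoc]
theorem e4' {a b : Ω} (h : a*b = 0) (z : Ω) : a*(b*z) = 0 := by
  rw [← mul_assoc, h, zero_mul]
theorem inv_rel {a d : Ω} {c : ℝ} (hc : c ≠ 0) (h : a*d = c•(d*a)) : d*a = c⁻¹•(a*d) := by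
  rw [h, smul_smul, inv_mul_cancel₀ hc, one_smul]
theorem sym_rel {a d : Ω} (h : a*d = d*a) : d*a = a*d := h.symm
end helpers

/- STATEMENT 17: computations in the noncommutative differential calculus {}_NΩ•_q of the
North chart of the quantum 4-sphere. Ω is the graded differential algebra, with degree-0
generators β23, β24, β23*, β24*, degree-1 generators dβ23, dβ24, dβ23*, dβ24*, and the
commutation relations of the chart (including those obtained by applying * and d). -/
theorem stmt17 (Ω : Type*) [Ring Ω] [Algebra ℝ Ω] (q : ℝ) (hq : q ≠ 0)
    (b23 b24 b23s b24s db23 db24 db23s db24s : Ω)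
    -- degree 0 relations
    (h01 : b23 * b24 = b24 * b23)
    (h02 : b23s * b24s = b24s * b23s)
    (h03 : b23 * b23s = ((q : ℝ) ^ 2)⁻¹ • (b23s * b23))
    (h04 : b23 * b24s = ((q : ℝ) ^ 2)⁻¹ • (b24s * b23))
    (h05 : b24 * b23s = ((q : ℝ) ^ 2)⁻¹ • (b23s * b24))
    (h06 : b24 * b24s = ((q : ℝ) ^ 2)⁻¹ • (b24s * b24))
    -- degree 0 / degree 1 relations
    (h11 : b23 * db23 = db23 * b23)
    (h12 : b23 * db23s = ((q : ℝ) ^ 2)⁻¹ • (db23s * b23))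
    (h13 : b23 * db24 = db24 * b23)
    (h14 : b23 * db24s = ((q : ℝ) ^ 2)⁻¹ • (db24s * b23))
    (h15 : b24 * db24 = db24 * b24)
    (h16 : b24 * db24s = ((q : ℝ) ^ 2)⁻¹ • (db24s * b24))
    (h17 : b24 * db23 = db23 * b24)
    (h18 : b24 * db23s = ((q : ℝ) ^ 2)⁻¹ • (db23s * b24))
    (h19 : b23s * db23 = ((q : ℝ) ^ 2) • (db23 * b23s))
    (h20 : b23s * db24 = ((q : ℝ) ^ 2) • (db24 * b23s))
    (h21 : b23s * db23s = db23s * b23s)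
    (h22 : b23s * db24s = db24s * b23s)
    (h23 : b24s * db23 = ((q : ℝ) ^ 2) • (db23 * b24s))
    (h24 : b24s * db24 = ((q : ℝ) ^ 2) • (db24 * b24s))
    (h25 : b24s * db23s = db23s * b24s)
    (h26 : b24s * db24s = db24s * b24s)
    -- degree 1 relations
    (h31 : db23 * db23 = 0) (h32 : db24 * db24 = 0)
    (h33 : db23s * db23s = 0) (h34 : db24s * db24s = 0)
    (h35 : db23 * db24 = -(db24 * db23))
    (h36 : db23s * db24s = -(db24s * db23s))
    (h37 : db23 * db23s = -(((q : ℝ) ^ 2)⁻¹ • (db23s * db23)))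
    (h38 : db23 * db24s = -(((q : ℝ) ^ 2)⁻¹ • (db24s * db23)))
    (h39 : db24 * db23s = -(((q : ℝ) ^ 2)⁻¹ • (db23s * db24)))
    (h40 : db24 * db24s = -(((q : ℝ) ^ 2)⁻¹ • (db24s * db24)))
    -- the one-form η₁ := β23*dβ23 + q²β24dβ24* - dβ23*·β23 - q²dβ24·β24*
    (η₁ : Ω)
    (hη₁ : η₁ = b23s * db23 + (q ^ 2) • (b24 * db24s)
      - db23s * b23 - (q ^ 2) • (db24 * b24s))
    -- the one-form η₂ := 2(β23*dβ24 - q²β24dβ23*)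
    (η₂ : Ω)
    (hη₂ : η₂ = (2 : ℝ) • (b23s * db24) - (2 * q ^ 2) • (b24 * db23s)) :
    η₁ * η₂ = -(η₂ * η₁) := by
  subst hη₁ hη₂
  have hq2 : (q:ℝ)^2 ≠ 0 := pow_ne_zero _ hq
  have hqi : ((q:ℝ)^2)⁻¹ ≠ 0 := inv_ne_zero hq2
  -- degree-1 past degree-0, base forms
  have k11 := sym_rel h11
  have k12 := inv_rel hqi h12
  have k13 := sym_rel h13
  have k14 := inv_rel hqi h14
  have k15 := sym_rel h15
  have k16 := inv_rel hqi h16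
  have k17 := sym_rel h17
  have k18 := inv_rel hqi h18
  have k19 := inv_rel hq2 h19
  have k20 := inv_rel hq2 h20
  have k21 := sym_rel h21
  have k22 := sym_rel h22
  have k23 := inv_rel hq2 h23
  have k24 := inv_rel hq2 h24
  have k25 := sym_rel h25
  have k26 := sym_rel h26
  simp only [mul_assoc, mul_add, add_mul, mul_sub, sub_mul, mul_neg, neg_mul,
    smul_mul_assoc, mul_smul_comm, smul_smul, smul_add, smul_sub, smul_neg,
    neg_neg, inv_inv, mul_zero, zero_mul, smul_zero, add_zero, zero_add,
    sub_zero, zero_sub, neg_zero,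
    -- degree-1 past degree-0
    k11, k12, k13, k14, k15, k16, k17, k18, k19, k20, k21, k22, k23, k24, k25, k26,
    e0' k11, e1' k12, e0' k13, e1' k14, e0' k15, e1' k16, e0' k17, e1' k18,
    e1' k19, e1' k20, e0' k21, e0' k22, e1' k23, e1' k24, e0' k25, e0' k26,
    -- degree-0 ordering
    h03, h04, h05, h06, h01.symm, h02.symm,
    e1' h03, e1' h04, e1' h05, e1' h06, e0' h01.symm, e0' h02.symm,
    -- degree-1 ordering
    h31, h32, h33, h34, h35, h36, h37, h38, h39, h40,
    e4' h31, e4' h32, e4' h33, e4' h34, e3' h35, e3' h36,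
    e2' h37, e2' h38, e2' h39, e2' h40]
  match_scalars <;> field_simp <;> ring
end

section
/- In the same differential calculus, with η₂ = 2(β23*dβ24 - q²β24dβ23*) and η₂* = 2(dβ24*·β23 - q²dβ23·β24*) its conjugate one-form, one has η₂∧η₂* = -η₂*∧η₂, and explicitly (1/4)η₂∧η₂* = q²β23*β23 dβ24dβ24* + q⁻²β23*β24* dβ23dβ24 - q⁶β23β24 dβ23*dβ24* + q²β24β24* dβ23*dβ23. -/
/- STATEMENT 18: computations in the noncommutative differential calculus {}_NΩ•_q of the
North chart of the quantum 4-sphere. Ω is the graded differential algebra, with degree-0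
generators β23, β24, β23*, β24*, degree-1 generators dβ23, dβ24, dβ23*, dβ24*, and the
commutation relations of the chart (including those obtained by applying * and d). -/
theorem stmt18 (Ω : Type*) [Ring Ω] [Algebra ℝ Ω] (q : ℝ) (hq : q ≠ 0)
    (b23 b24 b23s b24s db23 db24 db23s db24s : Ω)
    -- degree 0 relations
    (h01 : b23 * b24 = b24 * b23)
    (h02 : b23s * b24s = b24s * b23s)
    (h03 : b23 * b23s = ((q : ℝ) ^ 2)⁻¹ • (b23s * b23))
    (h04 : b23 * b24s = ((q : ℝ) ^ 2)⁻¹ • (b24s * b23))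
    (h05 : b24 * b23s = ((q : ℝ) ^ 2)⁻¹ • (b23s * b24))
    (h06 : b24 * b24s = ((q : ℝ) ^ 2)⁻¹ • (b24s * b24))
    -- degree 0 / degree 1 relations
    (h11 : b23 * db23 = db23 * b23)
    (h12 : b23 * db23s = ((q : ℝ) ^ 2)⁻¹ • (db23s * b23))
    (h13 : b23 * db24 = db24 * b23)
    (h14 : b23 * db24s = ((q : ℝ) ^ 2)⁻¹ • (db24s * b23))
    (h15 : b24 * db24 = db24 * b24)
    (h16 : b24 * db24s = ((q : ℝ) ^ 2)⁻¹ • (db24s * b24))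
    (h17 : b24 * db23 = db23 * b24)
    (h18 : b24 * db23s = ((q : ℝ) ^ 2)⁻¹ • (db23s * b24))
    (h19 : b23s * db23 = ((q : ℝ) ^ 2) • (db23 * b23s))
    (h20 : b23s * db24 = ((q : ℝ) ^ 2) • (db24 * b23s))
    (h21 : b23s * db23s = db23s * b23s)
    (h22 : b23s * db24s = db24s * b23s)
    (h23 : b24s * db23 = ((q : ℝ) ^ 2) • (db23 * b24s))
    (h24 : b24s * db24 = ((q : ℝ) ^ 2) • (db24 * b24s))
    (h25 : b24s * db23s = db23s * b24s)
    (h26 : b24s * db24s = db24s * b24s)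
    -- degree 1 relations
    (h31 : db23 * db23 = 0) (h32 : db24 * db24 = 0)
    (h33 : db23s * db23s = 0) (h34 : db24s * db24s = 0)
    (h35 : db23 * db24 = -(db24 * db23))
    (h36 : db23s * db24s = -(db24s * db23s))
    (h37 : db23 * db23s = -(((q : ℝ) ^ 2)⁻¹ • (db23s * db23)))
    (h38 : db23 * db24s = -(((q : ℝ) ^ 2)⁻¹ • (db24s * db23)))
    (h39 : db24 * db23s = -(((q : ℝ) ^ 2)⁻¹ • (db23s * db24)))
    (h40 : db24 * db24s = -(((q : ℝ) ^ 2)⁻¹ • (db24s * db24)))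
    -- the one-form η₁ := β23*dβ23 + q²β24dβ24* - dβ23*·β23 - q²dβ24·β24*
    (η₁ : Ω)
    (hη₁ : η₁ = b23s * db23 + (q ^ 2) • (b24 * db24s)
      - db23s * b23 - (q ^ 2) • (db24 * b24s))
    -- the one-form η₂ := 2(β23*dβ24 - q²β24dβ23*) and its conjugate
    -- η₂* = 2(dβ24*·β23 - q²dβ23·β24*)
    (η₂ η₂s : Ω)
    (hη₂ : η₂ = (2 : ℝ) • (b23s * db24) - (2 * q ^ 2) • (b24 * db23s))
    (hη₂s : η₂s = (2 : ℝ) • (db24s * b23) - (2 * q ^ 2) • (db23 * b24s)) :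
    η₂ * η₂s = -(η₂s * η₂) ∧
    ((4 : ℝ)⁻¹ • (η₂ * η₂s)
      = (q ^ 2) • (b23s * b23 * (db24 * db24s))
        + ((q : ℝ) ^ 2)⁻¹ • (b23s * b24s * (db23 * db24))
        - (q ^ 6) • (b23 * b24 * (db23s * db24s))
        + (q ^ 2) • (b24 * b24s * (db23s * db23))) := by

  have hq2 : (q : ℝ) ^ 2 ≠ 0 := pow_ne_zero 2 hq
  -- oriented plain swap lemmas (sort generators: b23 < b24 < b23s < b24s < db23 < db24 < db23s < db24s)
  have p01 : b24 * b23 = b23 * b24 := h01.symm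
  have p02 : b24s * b23s = b23s * b24s := h02.symm
  have p03 : b23s * b23 = (q:ℝ)^2 • (b23 * b23s) := by rw [h03, smul_inv_smul₀ hq2]
  have p04 : b24s * b23 = (q:ℝ)^2 • (b23 * b24s) := by rw [h04, smul_inv_smul₀ hq2]
  have p05 : b23s * b24 = (q:ℝ)^2 • (b24 * b23s) := by rw [h05, smul_inv_smul₀ hq2]
  have p06 : b24s * b24 = (q:ℝ)^2 • (b24 * b24s) := by rw [h06, smul_inv_smul₀ hq2]
  have p11 : db23 * b23 = b23 * db23 := h11.symm
  have p12 : db23s * b23 = (q:ℝ)^2 • (b23 * db23s) := by rw [h12, smul_inv_smul₀ hq2]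
  have p13 : db24 * b23 = b23 * db24 := h13.symm
  have p14 : db24s * b23 = (q:ℝ)^2 • (b23 * db24s) := by rw [h14, smul_inv_smul₀ hq2]
  have p15 : db24 * b24 = b24 * db24 := h15.symm
  have p16 : db24s * b24 = (q:ℝ)^2 • (b24 * db24s) := by rw [h16, smul_inv_smul₀ hq2]
  have p17 : db23 * b24 = b24 * db23 := h17.symm
  have p18 : db23s * b24 = (q:ℝ)^2 • (b24 * db23s) := by rw [h18, smul_inv_smul₀ hq2]
  have p19 : db23 * b23s = ((q:ℝ)^2)⁻¹ • (b23s * db23) := by rw [h19, inv_smul_smul₀ hq2]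
  have p20 : db24 * b23s = ((q:ℝ)^2)⁻¹ • (b23s * db24) := by rw [h20, inv_smul_smul₀ hq2]
  have p21 : db23s * b23s = b23s * db23s := h21.symm
  have p22 : db24s * b23s = b23s * db24s := h22.symm
  have p23 : db23 * b24s = ((q:ℝ)^2)⁻¹ • (b24s * db23) := by rw [h23, inv_smul_smul₀ hq2]
  have p24 : db24 * b24s = ((q:ℝ)^2)⁻¹ • (b24s * db24) := by rw [h24, inv_smul_smul₀ hq2]
  have p25 : db23s * b24s = b24s * db23s := h25.symm
  have p26 : db24s * b24s = b24s * db24s := h26.symm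
  have p35 : db24 * db23 = -(db23 * db24) := by rw [h35, neg_neg]
  have p36 : db24s * db23s = -(db23s * db24s) := by rw [h36, neg_neg]
  have p37 : db23s * db23 = -((q:ℝ)^2 • (db23 * db23s)) := by
    rw [h37, smul_neg, smul_inv_smul₀ hq2, neg_neg]
  have p38 : db24s * db23 = -((q:ℝ)^2 • (db23 * db24s)) := by
    rw [h38, smul_neg, smul_inv_smul₀ hq2, neg_neg]
  have p39 : db23s * db24 = -((q:ℝ)^2 • (db24 * db23s)) := by
    rw [h39, smul_neg, smul_inv_smul₀ hq2, neg_neg]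
  have p40 : db24s * db24 = -((q:ℝ)^2 • (db24 * db24s)) := by
    rw [h40, smul_neg, smul_inv_smul₀ hq2, neg_neg]
  -- generalized (right-tail) versions
  have g01 : ∀ x : Ω, b24 * (b23 * x) = b23 * (b24 * x) := fun x => by
    rw [← mul_assoc, p01, mul_assoc]
  have g02 : ∀ x : Ω, b24s * (b23s * x) = b23s * (b24s * x) := fun x => by
    rw [← mul_assoc, p02, mul_assoc]
  have g03 : ∀ x : Ω, b23s * (b23 * x) = (q:ℝ)^2 • (b23 * (b23s * x)) := fun x => by
    rw [← mul_assoc, p03, smul_mul_assoc, mul_assoc]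
  have g04 : ∀ x : Ω, b24s * (b23 * x) = (q:ℝ)^2 • (b23 * (b24s * x)) := fun x => by
    rw [← mul_assoc, p04, smul_mul_assoc, mul_assoc]
  have g05 : ∀ x : Ω, b23s * (b24 * x) = (q:ℝ)^2 • (b24 * (b23s * x)) := fun x => by
    rw [← mul_assoc, p05, smul_mul_assoc, mul_assoc]
  have g06 : ∀ x : Ω, b24s * (b24 * x) = (q:ℝ)^2 • (b24 * (b24s * x)) := fun x => by
    rw [← mul_assoc, p06, smul_mul_assoc, mul_assoc]
  have g11 : ∀ x : Ω, db23 * (b23 * x) = b23 * (db23 * x) := fun x => by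
    rw [← mul_assoc, p11, mul_assoc]
  have g12 : ∀ x : Ω, db23s * (b23 * x) = (q:ℝ)^2 • (b23 * (db23s * x)) := fun x => by
    rw [← mul_assoc, p12, smul_mul_assoc, mul_assoc]
  have g13 : ∀ x : Ω, db24 * (b23 * x) = b23 * (db24 * x) := fun x => by
    rw [← mul_assoc, p13, mul_assoc]
  have g14 : ∀ x : Ω, db24s * (b23 * x) = (q:ℝ)^2 • (b23 * (db24s * x)) := fun x => by
    rw [← mul_assoc, p14, smul_mul_assoc, mul_assoc]
  have g15 : ∀ x : Ω, db24 * (b24 * x) = b24 * (db24 * x) := fun x => by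
    rw [← mul_assoc, p15, mul_assoc]
  have g16 : ∀ x : Ω, db24s * (b24 * x) = (q:ℝ)^2 • (b24 * (db24s * x)) := fun x => by
    rw [← mul_assoc, p16, smul_mul_assoc, mul_assoc]
  have g17 : ∀ x : Ω, db23 * (b24 * x) = b24 * (db23 * x) := fun x => by
    rw [← mul_assoc, p17, mul_assoc]
  have g18 : ∀ x : Ω, db23s * (b24 * x) = (q:ℝ)^2 • (b24 * (db23s * x)) := fun x => by
    rw [← mul_assoc, p18, smul_mul_assoc, mul_assoc]
  have g19 : ∀ x : Ω, db23 * (b23s * x) = ((q:ℝ)^2)⁻¹ • (b23s * (db23 * x)) := fun x => by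
    rw [← mul_assoc, p19, smul_mul_assoc, mul_assoc]
  have g20 : ∀ x : Ω, db24 * (b23s * x) = ((q:ℝ)^2)⁻¹ • (b23s * (db24 * x)) := fun x => by
    rw [← mul_assoc, p20, smul_mul_assoc, mul_assoc]
  have g21 : ∀ x : Ω, db23s * (b23s * x) = b23s * (db23s * x) := fun x => by
    rw [← mul_assoc, p21, mul_assoc]
  have g22 : ∀ x : Ω, db24s * (b23s * x) = b23s * (db24s * x) := fun x => by
    rw [← mul_assoc, p22, mul_assoc]
  have g23 : ∀ x : Ω, db23 * (b24s * x) = ((q:ℝ)^2)⁻¹ • (b24s * (db23 * x)) := fun x => by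
    rw [← mul_assoc, p23, smul_mul_assoc, mul_assoc]
  have g24 : ∀ x : Ω, db24 * (b24s * x) = ((q:ℝ)^2)⁻¹ • (b24s * (db24 * x)) := fun x => by
    rw [← mul_assoc, p24, smul_mul_assoc, mul_assoc]
  have g25 : ∀ x : Ω, db23s * (b24s * x) = b24s * (db23s * x) := fun x => by
    rw [← mul_assoc, p25, mul_assoc]
  have g26 : ∀ x : Ω, db24s * (b24s * x) = b24s * (db24s * x) := fun x => by
    rw [← mul_assoc, p26, mul_assoc]
  have g31 : ∀ x : Ω, db23 * (db23 * x) = 0 := fun x => by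
    rw [← mul_assoc, h31, zero_mul]
  have g32 : ∀ x : Ω, db24 * (db24 * x) = 0 := fun x => by
    rw [← mul_assoc, h32, zero_mul]
  have g33 : ∀ x : Ω, db23s * (db23s * x) = 0 := fun x => by
    rw [← mul_assoc, h33, zero_mul]
  have g34 : ∀ x : Ω, db24s * (db24s * x) = 0 := fun x => by
    rw [← mul_assoc, h34, zero_mul]
  have g35 : ∀ x : Ω, db24 * (db23 * x) = -(db23 * (db24 * x)) := fun x => by
    rw [← mul_assoc, p35, neg_mul, mul_assoc]
  have g36 : ∀ x : Ω, db24s * (db23s * x) = -(db23s * (db24s * x)) := fun x => by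
    rw [← mul_assoc, p36, neg_mul, mul_assoc]
  have g37 : ∀ x : Ω, db23s * (db23 * x) = -((q:ℝ)^2 • (db23 * (db23s * x))) := fun x => by
    rw [← mul_assoc, p37, neg_mul, smul_mul_assoc, mul_assoc]
  have g38 : ∀ x : Ω, db24s * (db23 * x) = -((q:ℝ)^2 • (db23 * (db24s * x))) := fun x => by
    rw [← mul_assoc, p38, neg_mul, smul_mul_assoc, mul_assoc]
  have g39 : ∀ x : Ω, db23s * (db24 * x) = -((q:ℝ)^2 • (db24 * (db23s * x))) := fun x => by
    rw [← mul_assoc, p39, neg_mul, smul_mul_assoc, mul_assoc]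
  have g40 : ∀ x : Ω, db24s * (db24 * x) = -((q:ℝ)^2 • (db24 * (db24s * x))) := fun x => by
    rw [← mul_assoc, p40, neg_mul, smul_mul_assoc, mul_assoc]
  constructor
  · rw [hη₂, hη₂s]
    simp only [sub_mul, mul_sub, smul_mul_assoc, mul_smul_comm, smul_smul, mul_assoc,
      neg_mul, mul_neg, smul_neg, neg_neg, neg_sub,
      p01, p02, p03, p04, p05, p06, p11, p12, p13, p14, p15, p16, p17, p18, p19, p20,
      p21, p22, p23, p24, p25, p26, h31, h32, h33, h34, p35, p36, p37, p38, p39, p40,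
      g01, g02, g03, g04, g05, g06, g11, g12, g13, g14, g15, g16, g17, g18, g19, g20,
      g21, g22, g23, g24, g25, g26, g31, g32, g33, g34, g35, g36, g37, g38, g39, g40,
      smul_zero, mul_zero, zero_mul]
    match_scalars <;> field_simp <;> ring
  · rw [hη₂, hη₂s]
    simp only [sub_mul, mul_sub, smul_mul_assoc, mul_smul_comm, smul_smul, mul_assoc,
      neg_mul, mul_neg, smul_neg, neg_neg, neg_sub, smul_sub, smul_add,
      p01, p02, p03, p04, p05, p06, p11, p12, p13, p14, p15, p16, p17, p18, p19, p20,
      p21, p22, p23, p24, p25, p26, h31, h32, h33, h34, p35, p36, p37, p38, p39, p40,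
      g01, g02, g03, g04, g05, g06, g11, g12, g13, g14, g15, g16, g17, g18, g19, g20,
      g21, g22, g23, g24, g25, g26, g31, g32, g33, g34, g35, g36, g37, g38, g39, g40,
      smul_zero, mul_zero, zero_mul]
    match_scalars <;> field_simp <;> ring
end
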